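/- arXiv:2406.00150 — 5 statements merged into one kernel-verified Lean document; each statement's English description precedes it below -/
import Mathlib

section
/- Let f : ℝⁿ → ℝ be convex, differentiable, and coordinatewise L-smooth for some L ∈ ℝⁿ with all entries Lᵢ > 0, and let η ∈ ℝⁿ satisfy 0 < ηᵢ ≤ 1/Lᵢ for every coordinate i. Then for all θ, θ* ∈ ℝⁿ, the update θ' = θ − η ⊙ ∇f(θ) satisfies f(θ') − f(θ*) ≤ (1/2) ( Σᵢ (1/ηᵢ)(θᵢ − θ*ᵢ)² − Σᵢ (1/ηᵢ)(θ'ᵢ − θ*ᵢ)² ). -/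
open Finset

/-- The `i`-th partial derivative of `f : ℝⁿ → ℝ` at `x`. -/
noncomputable def pderiv' {n : ℕ} (f : (Fin n → ℝ) → ℝ) (i : Fin n) (x : Fin n → ℝ) : ℝ :=
  fderiv ℝ f x (Pi.single i 1)

lemma fderiv_eq_sum_pderiv {n : ℕ} (f : (Fin n → ℝ) → ℝ) (x v : Fin n → ℝ) :
    fderiv ℝ f x v = ∑ i, v i * pderiv' f i x := by
  have hv : v = ∑ i, (v i) • (Pi.single i (1:ℝ) : Fin n → ℝ) := by
    rw [← Finset.univ_sum_single v]
    congr 1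
    funext i
    rw [← Pi.single_smul']
    simp
  conv_lhs => rw [hv]
  rw [map_sum]
  simp [pderiv', map_smul, smul_eq_mul]

lemma grad_ineq {n : ℕ} (f : (Fin n → ℝ) → ℝ) (hconv : ConvexOn ℝ Set.univ f)
    (hdiff : Differentiable ℝ f) (x y : Fin n → ℝ) :
    f x + fderiv ℝ f x (y - x) ≤ f y := by
  set v := y - x with hv
  set g : ℝ → ℝ := fun t => f (x + t • v) with hg
  have hgc : ConvexOn ℝ Set.univ g := by
    have hA : g = f ∘ (AffineMap.lineMap x y) := by
      funext t
      simp only [hg, Function.comp_apply, AffineMap.lineMap_apply_module]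
      congr 1
      simp [hv]
      module
    rw [hA]
    have := hconv.comp_affineMap (AffineMap.lineMap x y)
    simpa using this
  have hd : HasDerivAt g (fderiv ℝ f x v) 0 := by
    have h1 : HasDerivAt (fun t : ℝ => x + t • v) v 0 := by
      simpa using ((hasDerivAt_id (0:ℝ)).smul_const v).const_add x
    have h2 : HasFDerivAt f (fderiv ℝ f x) (x + (0:ℝ) • v) := by
      simpa using (hdiff x).hasFDerivAt
    exact h2.comp_hasDerivAt 0 h1
  have := hgc.le_slope_of_hasDerivAt (Set.mem_univ 0) (Set.mem_univ 1) one_pos hd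
  have hs : slope g 0 1 = f y - f x := by
    simp [slope_def_field, hg, hv]
  rw [hs] at this
  linarith

/-- For a convex, differentiable, coordinatewise `L`-smooth `f` and learning rates
`0 < ηᵢ ≤ 1/Lᵢ`, one step of coordinatewise gradient descent `θ' = θ − η ⊙ ∇f(θ)` satisfies
`f(θ') − f(θ*) ≤ (1/2)(Σᵢ (1/ηᵢ)(θᵢ − θ*ᵢ)² − Σᵢ (1/ηᵢ)(θ'ᵢ − θ*ᵢ)²)`. -/
theorem mtsl_convex_step {n : ℕ} (f : (Fin n → ℝ) → ℝ) (L η : Fin n → ℝ)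
    (hconv : ConvexOn ℝ Set.univ f)
    (hdiff : Differentiable ℝ f)
    (hL : ∀ i, 0 < L i)
    (hsmooth : ∀ x y : Fin n → ℝ,
      f y ≤ f x + (∑ i, pderiv' f i x * (y i - x i)) + (1 / 2) * ∑ i, L i * (y i - x i) ^ 2)
    (hη : ∀ i, 0 < η i) (hηL : ∀ i, η i ≤ 1 / L i)
    (θ θs : Fin n → ℝ) :
    f (fun i => θ i - η i * pderiv' f i θ) - f θs ≤
      (1 / 2) * ((∑ i, (1 / η i) * (θ i - θs i) ^ 2) -
        ∑ i, (1 / η i) * ((θ i - η i * pderiv' f i θ) - θs i) ^ 2) := by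
  set g : Fin n → ℝ := fun i => pderiv' f i θ with hgdef
  set θ' : Fin n → ℝ := fun i => θ i - η i * g i with hθ'
  -- Smoothness step
  have hA : f θ' ≤ f θ - (1/2) * ∑ i, η i * (g i)^2 := by
    have h1 := hsmooth θ θ'
    have e1 : (∑ i, pderiv' f i θ * (θ' i - θ i)) = -∑ i, η i * (g i)^2 := by
      rw [← Finset.sum_neg_distrib]
      apply Finset.sum_congr rfl
      intro i _
      simp [hθ', hgdef]
      ring
    have e2 : ∑ i, L i * (θ' i - θ i)^2 ≤ ∑ i, η i * (g i)^2 := by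
      apply Finset.sum_le_sum
      intro i _
      have hLi := hL i
      have hηi := hη i
      have hle : η i * L i ≤ 1 := (le_div_iff₀ hLi).mp (hηL i)
      have : L i * (θ' i - θ i)^2 = (η i * L i) * (η i * (g i)^2) := by
        simp only [hθ']
        ring
      rw [this]
      have hnn : 0 ≤ η i * (g i)^2 := by positivity
      nlinarith
    rw [e1] at h1
    nlinarith
  -- Convexity step
  have hB : f θ ≤ f θs + ∑ i, g i * (θ i - θs i) := by
    have := grad_ineq f hconv hdiff θ θs
    rw [fderiv_eq_sum_pderiv] at this
    have e : (∑ i, (θs - θ) i * pderiv' f i θ) = -∑ i, g i * (θ i - θs i) := by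
      rw [← Finset.sum_neg_distrib]
      apply Finset.sum_congr rfl
      intro i _
      simp [hgdef]
      ring
    rw [e] at this
    linarith
  -- RHS identity
  have hR : (1 / 2) * ((∑ i, (1 / η i) * (θ i - θs i) ^ 2) -
        ∑ i, (1 / η i) * ((θ i - η i * g i) - θs i) ^ 2)
      = (∑ i, g i * (θ i - θs i)) - (1/2) * ∑ i, η i * (g i)^2 := by
    have e : ∀ i : Fin n, (1 / η i) * (θ i - θs i) ^ 2
        - (1 / η i) * ((θ i - η i * g i) - θs i) ^ 2
        = 2 * (g i * (θ i - θs i)) - η i * (g i)^2 := by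
      intro i
      have h := (hη i).ne'
      field_simp
      ring
    rw [← Finset.sum_sub_distrib, Finset.sum_congr rfl (fun i _ => e i),
      Finset.sum_sub_distrib, ← Finset.mul_sum]
    ring
  rw [hR]
  linarith
end

section
/- Let f : ℝⁿ → ℝ be convex, differentiable, and coordinatewise L-smooth for some L ∈ ℝⁿ with all entries Lᵢ > 0, let η ∈ ℝⁿ satisfy 0 < ηᵢ ≤ 1/Lᵢ for every coordinate i, let θ* be a global minimizer of f, and let θ(t) be the coordinatewise gradient-descent iterates with learning-rate vector η. Then for every T ≥ 1, the telescoping bound Σ_{t=0}^{T−1} ( f(θ(t+1)) − f(θ*) ) ≤ (1/2) Σᵢ (1/ηᵢ)(θᵢ(0) − θ*ᵢ)² holds. -/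
/-!
Convexity gives `f(θ(t)) − f(θ*) ≤ ⟨∇f(θ(t)), θ(t) − θ*⟩`, and smoothness with `ηᵢ Lᵢ ≤ 1` gives the
sufficient decrease `f(θ(t+1)) ≤ f(θ(t)) − ½ Σᵢ ηᵢ (∂ᵢf(θ(t)))²`. Expanding the square in
`Φ(x) = ½ Σᵢ (1/ηᵢ)(xᵢ − θ*ᵢ)²` shows that these combine to
`f(θ(t+1)) − f(θ*) ≤ Φ(θ(t)) − Φ(θ(t+1))`, and the sum over `t` telescopes to at most `Φ(θ(0))`.
-/

open Finset

theorem sum_pderiv'_mul {n : ℕ} (f : (Fin n → ℝ) → ℝ) (x v : Fin n → ℝ) :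
    ∑ i, pderiv' f i x * v i = fderiv ℝ f x v := by
  conv_rhs => rw [← univ_sum_single v, map_sum]
  refine sum_congr rfl fun i _ => ?_
  rw [pderiv', mul_comm, ← smul_eq_mul, ← map_smul, ← Pi.single_smul', smul_eq_mul, mul_one]

theorem ConvexOn.add_fderiv_sub_le {E : Type*} [NormedAddCommGroup E] [NormedSpace ℝ E]
    {s : Set E} {f : E → ℝ} (hf : ConvexOn ℝ s f) {x y : E} (hx : x ∈ s) (hy : y ∈ s)
    (hfx : DifferentiableAt ℝ f x) : f x + fderiv ℝ f x (y - x) ≤ f y := by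
  have hline : ConvexOn ℝ (AffineMap.lineMap x y ⁻¹' s) (f ∘ AffineMap.lineMap x y) :=
    hf.comp_affineMap _
  have hderiv : HasDerivAt (f ∘ AffineMap.lineMap x y) (fderiv ℝ f x (y - x)) (0 : ℝ) :=
    hfx.hasFDerivAt.comp_hasDerivAt_of_eq (0 : ℝ) AffineMap.hasDerivAt_lineMap
      (AffineMap.lineMap_apply_zero x y).symm
  have hslope := hline.le_slope_of_hasDerivAt (by simpa) (by simpa) one_pos hderiv
  simp only [slope, Function.comp_apply, AffineMap.lineMap_apply_zero,
    AffineMap.lineMap_apply_one, sub_zero, inv_one, one_smul, vsub_eq_sub] at hslope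
  linarith

theorem sum_range_le_of_le_sub {α : Type*} [AddCommGroup α] [PartialOrder α]
    [IsOrderedAddMonoid α] {a A : ℕ → α} (h : ∀ t, a t ≤ A t - A (t + 1)) (T : ℕ)
    (hA : 0 ≤ A T) : ∑ t ∈ range T, a t ≤ A 0 :=
  calc ∑ t ∈ range T, a t ≤ ∑ t ∈ range T, (A t - A (t + 1)) := sum_le_sum fun t _ => h t
    _ = A 0 - A T := sum_range_sub' A T
    _ ≤ A 0 := sub_le_self _ hA

section GradientStep

variable {ι : Type*} [Fintype ι]

noncomputable def halfWeightedSqDist (η x z : ι → ℝ) : ℝ :=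
  (1 / 2) * ∑ i, (1 / η i) * (x i - z i) ^ 2

theorem halfWeightedSqDist_nonneg {η : ι → ℝ} (hη : ∀ i, 0 ≤ η i) (x z : ι → ℝ) :
    0 ≤ halfWeightedSqDist η x z :=
  mul_nonneg (by norm_num) <| sum_nonneg fun i _ =>
    mul_nonneg (one_div_nonneg.mpr (hη i)) (sq_nonneg _)

theorem halfWeightedSqDist_sub_step {η : ι → ℝ} (hη : ∀ i, η i ≠ 0) (g x z : ι → ℝ) :
    halfWeightedSqDist η x z - halfWeightedSqDist η (x - η * g) z =
      ∑ i, g i * (x i - z i) - (1 / 2) * ∑ i, η i * g i ^ 2 := by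
  simp only [halfWeightedSqDist, ← mul_sub, ← sum_sub_distrib, mul_sum]
  refine sum_congr rfl fun i _ => ?_
  simp only [Pi.sub_apply, Pi.mul_apply]
  field_simp [hη i]
  ring

theorem sufficient_decrease {f : (ι → ℝ) → ℝ} {L η g x : ι → ℝ} (hη : ∀ i, 0 ≤ η i)
    (hηL : ∀ i, η i * L i ≤ 1)
    (hsmooth : f (x - η * g) ≤ f x + ∑ i, g i * ((x - η * g) i - x i) +
      (1 / 2) * ∑ i, L i * ((x - η * g) i - x i) ^ 2) :
    f (x - η * g) ≤ f x - (1 / 2) * ∑ i, η i * g i ^ 2 := by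
  have hquad : ∑ i, L i * ((x - η * g) i - x i) ^ 2 ≤ ∑ i, η i * g i ^ 2 :=
    sum_le_sum fun i _ => by
      have hterm : L i * ((x - η * g) i - x i) ^ 2 = (η i * L i) * (η i * g i ^ 2) := by
        simp only [Pi.sub_apply, Pi.mul_apply]; ring
      rw [hterm]
      exact mul_le_of_le_one_left (mul_nonneg (hη i) (sq_nonneg _)) (hηL i)
  have hlin : ∑ i, g i * ((x - η * g) i - x i) = -∑ i, η i * g i ^ 2 := by
    rw [← sum_neg_distrib]
    refine sum_congr rfl fun i _ => ?_
    simp only [Pi.sub_apply, Pi.mul_apply]; ring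
  linarith

theorem sub_le_halfWeightedSqDist_sub {f : (ι → ℝ) → ℝ} {L η g x z : ι → ℝ}
    (hη : ∀ i, 0 < η i) (hηL : ∀ i, η i * L i ≤ 1)
    (hsmooth : f (x - η * g) ≤ f x + ∑ i, g i * ((x - η * g) i - x i) +
      (1 / 2) * ∑ i, L i * ((x - η * g) i - x i) ^ 2)
    (hconv : f x + ∑ i, g i * (z i - x i) ≤ f z) :
    f (x - η * g) - f z ≤ halfWeightedSqDist η x z - halfWeightedSqDist η (x - η * g) z := by
  have hdecrease := sufficient_decrease (fun i => (hη i).le) hηL hsmooth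
  have hcross : ∑ i, g i * (z i - x i) = -∑ i, g i * (x i - z i) := by
    rw [← sum_neg_distrib]; exact sum_congr rfl fun i _ => by ring
  rw [halfWeightedSqDist_sub_step (fun i => (hη i).ne')]
  linarith

end GradientStep

theorem mtsl_telescope_general {n : ℕ} (f : (Fin n → ℝ) → ℝ) (L η : Fin n → ℝ)
    (hconv : ConvexOn ℝ Set.univ f)
    (hdiff : Differentiable ℝ f)
    (hsmooth : ∀ x y : Fin n → ℝ,
      f y ≤ f x + (∑ i, pderiv' f i x * (y i - x i)) + (1 / 2) * ∑ i, L i * (y i - x i) ^ 2)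
    (hη : ∀ i, 0 < η i) (hηL : ∀ i, η i ≤ 1 / L i)
    (θs : Fin n → ℝ)
    (θ : ℕ → Fin n → ℝ)
    (hiter : ∀ t, θ (t + 1) = fun i => θ t i - η i * pderiv' f i (θ t))
    (T : ℕ) :
    ∑ t ∈ Finset.range T, (f (θ (t + 1)) - f θs) ≤
      (1 / 2) * ∑ i, (1 / η i) * (θ 0 i - θs i) ^ 2 := by
  have hηL' : ∀ i, η i * L i ≤ 1 := fun i =>
    (le_div_iff₀ (one_div_pos.mp ((hη i).trans_le (hηL i)))).mp (hηL i)
  refine sum_range_le_of_le_sub (A := fun t => halfWeightedSqDist η (θ t) θs) (fun t => ?_) T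
    (halfWeightedSqDist_nonneg (fun i => (hη i).le) _ _)
  let g : Fin n → ℝ := fun i => pderiv' f i (θ t)
  have hstep : θ (t + 1) = θ t - η * g := hiter t
  have hsmooth_t := hsmooth (θ t) (θ (t + 1))
  have hconv_t : f (θ t) + ∑ i, g i * (θs i - θ t i) ≤ f θs := by
    rw [sum_pderiv'_mul]
    exact hconv.add_fderiv_sub_le trivial trivial (hdiff _)
  rw [hstep] at hsmooth_t ⊢
  exact sub_le_halfWeightedSqDist_sub hη hηL' hsmooth_t hconv_t

/-- Telescoping bound for coordinatewise gradient descent on a convex, differentiable,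
coordinatewise `L`-smooth function `f` with learning rates `0 < ηᵢ ≤ 1/Lᵢ` and global
minimizer `θ*`:
`Σ_{t=0}^{T−1} (f(θ(t+1)) − f(θ*)) ≤ (1/2) Σᵢ (1/ηᵢ)(θᵢ(0) − θ*ᵢ)²`. -/
theorem mtsl_telescope {n : ℕ} (f : (Fin n → ℝ) → ℝ) (L η : Fin n → ℝ)
    (hconv : ConvexOn ℝ Set.univ f)
    (hdiff : Differentiable ℝ f)
    (hL : ∀ i, 0 < L i)
    (hsmooth : ∀ x y : Fin n → ℝ,
      f y ≤ f x + (∑ i, pderiv' f i x * (y i - x i)) + (1 / 2) * ∑ i, L i * (y i - x i) ^ 2)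
    (hη : ∀ i, 0 < η i) (hηL : ∀ i, η i ≤ 1 / L i)
    (θs : Fin n → ℝ) (hmin : ∀ x, f θs ≤ f x)
    (θ : ℕ → Fin n → ℝ)
    (hiter : ∀ t, θ (t + 1) = fun i => θ t i - η i * pderiv' f i (θ t))
    (T : ℕ) (hT : 1 ≤ T) :
    ∑ t ∈ Finset.range T, (f (θ (t + 1)) - f θs) ≤
      (1 / 2) * ∑ i, (1 / η i) * (θ 0 i - θs i) ^ 2 :=
  mtsl_telescope_general f L η hconv hdiff hsmooth hη hηL θs θ hiter T
end

section
/- Let f : ℝⁿ → ℝ be differentiable and coordinatewise L-smooth for some L ∈ ℝⁿ with all entries Lᵢ > 0, and consider one step of the stochastic MTSL iteration at time t with unbiased gradient estimate: E[g̃(t) | ℱ_t] = ∇f(θ(t)) almost surely, g̃(t) square-integrable, and f(θ(t+1)) integrable. Then almost surely E[ f(θ(t+1)) | ℱ_t ] ≤ f(θ(t)) − Σᵢ ηᵢ(t) (∂ᵢf(θ(t)))² + (1/2) Σᵢ Lᵢ ηᵢ(t)² E[ g̃ᵢ(t)² | ℱ_t ]. -/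
/-!
Coordinatewise smoothness, applied at `x = θ` and `y = θ - η ⊙ g̃`, bounds `f(θ(t+1))` pointwise
by `f(θ) - Σᵢ ηᵢ ∂ᵢf(θ) g̃ᵢ + ½ Σᵢ Lᵢ ηᵢ² g̃ᵢ²`. Conditioning on `ℱₜ`, the term `f(θ)` is
measurable, `∂ᵢf(θ)` pulls out of the conditional expectation and unbiasedness turns
`E[g̃ᵢ | ℱₜ]` into `∂ᵢf(θ)`. Since `f(θ)` need not be integrable, the monotonicity step uses that
`E[X | ℱ] ≤ u` for every integrable `X ≤ u` with `u` merely `ℱ`-measurable.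
-/

open MeasureTheory Finset

section CondExp

variable {Ω : Type*} {m m₀ : MeasurableSpace Ω} {μ : Measure Ω}

theorem condExp_le_of_ae_le_stronglyMeasurable (hm : m ≤ m₀) [SigmaFinite (μ.trim hm)]
    {X u : Ω → ℝ} (hX : Integrable X μ) (hu : StronglyMeasurable[m] u) (hXu : X ≤ᵐ[μ] u) :
    μ[X | m] ≤ᵐ[μ] u := by
  set A := {ω | u ω < μ[X | m] ω}
  have hA : MeasurableSet[m] A :=
    measurableSet_lt hu.measurable stronglyMeasurable_condExp.measurable
  -- on `A` the bound `u` is squeezed between `X` and `μ[X | m]`, hence integrable there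
  have hXu_A : A.indicator X ≤ᵐ[μ] A.indicator u :=
    hXu.mono fun ω h => Set.indicator_le_indicator h
  have huA : Integrable (A.indicator u) μ :=
    integrable_of_le_of_le ((hu.mono hm).aestronglyMeasurable.indicator (hm _ hA)) hXu_A
      (.of_forall fun ω => Set.indicator_le_indicator' fun h => h.le)
      (hX.indicator (hm _ hA)) (integrable_condExp.indicator (hm _ hA))
  have key : A.indicator (μ[X | m]) ≤ᵐ[μ] A.indicator u :=
    (condExp_indicator hX hA).symm.trans_le <|
      (condExp_mono (hX.indicator (hm _ hA)) huA hXu_A).trans_eq <|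
        .of_eq (condExp_of_stronglyMeasurable hm (hu.indicator hA) huA)
  filter_upwards [key] with ω hω
  by_contra! hlt
  simp only [Set.indicator_of_mem (show ω ∈ A from hlt)] at hω
  exact hω.not_gt hlt

theorem condExp_le_add_condExp_of_le_add (hm : m ≤ m₀) [SigmaFinite (μ.trim hm)]
    {X Y u : Ω → ℝ} (hX : Integrable X μ) (hY : Integrable Y μ) (hu : StronglyMeasurable[m] u)
    (hXY : X ≤ᵐ[μ] u + Y) : μ[X | m] ≤ᵐ[μ] u + μ[Y | m] := by
  have h := condExp_le_of_ae_le_stronglyMeasurable hm (hX.sub hY) hu <|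
    hXY.mono fun ω hω => sub_le_iff_le_add.2 hω
  filter_upwards [h, condExp_sub hX hY m] with ω h₁ h₂
  simp only [Pi.add_apply, Pi.sub_apply] at h₁ h₂ ⊢
  linarith

theorem condExp_pi_apply {ι : Type*} [Fintype ι] {g : Ω → ι → ℝ} (hg : Integrable g μ) (i : ι) :
    μ[fun ω => g ω i | m] =ᵐ[μ] fun ω => μ[g | m] ω i :=
  ((ContinuousLinearMap.proj i).comp_condExp_comm hg).symm

theorem condExp_sum_const_mul {ι : Type*} (s : Finset ι) (c : ι → ℝ) {X : ι → Ω → ℝ}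
    (hX : ∀ i ∈ s, Integrable (X i) μ) :
    μ[fun ω => ∑ i ∈ s, c i * X i ω | m] =ᵐ[μ] fun ω => ∑ i ∈ s, c i * μ[X i | m] ω := by
  have hsum := condExp_finsetSum (m := m) (fun i hi => (hX i hi).const_mul (c i))
  have hsmul : ∀ i, μ[fun ω => c i * X i ω | m] =ᵐ[μ] fun ω => c i * μ[X i | m] ω :=
    fun i => condExp_smul (c i) (X i) m
  filter_upwards [hsum, (s.eventually_all).2 fun i _ => hsmul i] with ω h₁ h₂
  rw [show (fun ω => ∑ i ∈ s, c i * X i ω) = ∑ i ∈ s, fun ω => c i * X i ω by ext; simp, h₁,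
    Finset.sum_apply]
  exact Finset.sum_congr rfl h₂

theorem integrable_mul_of_condExp_eq {g D : Ω → ℝ} (hg : MemLp g 2 μ) (hgD : μ[g | m] =ᵐ[μ] D) :
    Integrable (D * g) μ :=
  ((hg.condExp one_le_two).ae_eq hgD).integrable_mul hg

theorem condExp_mul_eq_sq_of_condExp_eq [IsFiniteMeasure μ] {g D : Ω → ℝ}
    (hD : StronglyMeasurable[m] D) (hg : MemLp g 2 μ) (hgD : μ[g | m] =ᵐ[μ] D) :
    μ[D * g | m] =ᵐ[μ] D ^ 2 := by
  filter_upwards [condExp_mul_of_stronglyMeasurable_left hD (integrable_mul_of_condExp_eq hg hgD)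
    (hg.integrable one_le_two), hgD] with ω h₁ h₂
  simp only [h₁, Pi.mul_apply, h₂, Pi.pow_apply, sq]

end CondExp

theorem coordwise_smooth_step_le {n : ℕ} {f : (Fin n → ℝ) → ℝ} {L : Fin n → ℝ}
    (hsmooth : ∀ x y : Fin n → ℝ,
      f y ≤ f x + (∑ i, pderiv' f i x * (y i - x i)) + (1 / 2) * ∑ i, L i * (y i - x i) ^ 2)
    (x v η : Fin n → ℝ) :
    f (fun i => x i - η i * v i) ≤
      f x + ((1 / 2) * ∑ i, L i * η i ^ 2 * v i ^ 2 - ∑ i, η i * (pderiv' f i x * v i)) := by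
  have hlin : ∑ i, pderiv' f i x * (x i - η i * v i - x i) = -∑ i, η i * (pderiv' f i x * v i) := by
    rw [← Finset.sum_neg_distrib]; exact Finset.sum_congr rfl fun i _ => by ring
  have hquad : ∑ i, L i * (x i - η i * v i - x i) ^ 2 = ∑ i, L i * η i ^ 2 * v i ^ 2 :=
    Finset.sum_congr rfl fun i _ => by ring
  linarith [hsmooth x fun i => x i - η i * v i]

theorem mtsl_sgd_descent_step_general {n : ℕ} {Ω : Type*} {m0 : MeasurableSpace Ω}
    (μ : Measure Ω) [IsProbabilityMeasure μ]
    (F : MeasurableSpace Ω) (hF : F ≤ m0)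
    (f : (Fin n → ℝ) → ℝ) (L : Fin n → ℝ)
    (hdiff : Differentiable ℝ f)
    (hsmooth : ∀ x y : Fin n → ℝ,
      f y ≤ f x + (∑ i, pderiv' f i x * (y i - x i)) + (1 / 2) * ∑ i, L i * (y i - x i) ^ 2)
    (η : Fin n → ℝ)
    (θ gt : Ω → Fin n → ℝ)
    (hθmeas : Measurable[F] θ)
    (hgt2 : MemLp gt 2 μ)
    (hunbiased : μ[gt | F] =ᵐ[μ] fun ω => fun i => pderiv' f i (θ ω))
    (hfint : Integrable (fun ω => f (fun i => θ ω i - η i * gt ω i)) μ) :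
    μ[(fun ω => f (fun i => θ ω i - η i * gt ω i)) | F] ≤ᵐ[μ]
      fun ω => f (θ ω) - (∑ i, η i * (pderiv' f i (θ ω)) ^ 2)
        + (1 / 2) * ∑ i, L i * (η i) ^ 2 * (μ[(fun ω' => (gt ω' i) ^ 2) | F]) ω := by
  set g : Fin n → Ω → ℝ := fun i ω => gt ω i
  set D : Fin n → Ω → ℝ := fun i ω => pderiv' f i (θ ω)
  have hg : ∀ i, MemLp (g i) 2 μ := hgt2.eval
  have hD : ∀ i, StronglyMeasurable[F] (D i) := fun i =>
    ((measurable_fderiv_apply_const ℝ f (Pi.single i 1)).comp hθmeas).stronglyMeasurable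
  have hgD : ∀ i, μ[g i | F] =ᵐ[μ] D i := fun i =>
    (condExp_pi_apply (hgt2.integrable one_le_two) i).trans
      (hunbiased.mono fun ω hω => congrFun hω i)
  set Q : Ω → ℝ := fun ω => ∑ i, L i * η i ^ 2 * g i ω ^ 2
  set P : Ω → ℝ := fun ω => ∑ i, η i * (D i * g i) ω
  have hQ : Integrable Q μ := integrable_finsetSum _ fun i _ => (hg i).integrable_sq.const_mul _
  have hP : Integrable P μ :=
    integrable_finsetSum _ fun i _ => (integrable_mul_of_condExp_eq (hg i) (hgD i)).const_mul _
  have hstep : μ[fun ω => f (fun i => θ ω i - η i * gt ω i) | F] ≤ᵐ[μ]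
      (fun ω => f (θ ω)) + μ[(1 / 2 : ℝ) • Q - P | F] :=
    condExp_le_add_condExp_of_le_add hF hfint ((hQ.smul _).sub hP)
      (hdiff.continuous.measurable.comp hθmeas).stronglyMeasurable
      (.of_forall fun ω => coordwise_smooth_step_le hsmooth (θ ω) (gt ω) η)
  filter_upwards [hstep, condExp_sub (hQ.smul (1 / 2 : ℝ)) hP F,
      condExp_smul (m := F) (μ := μ) (1 / 2 : ℝ) Q,
      condExp_sum_const_mul (m := F) univ (fun i => L i * η i ^ 2) fun i _ => (hg i).integrable_sq,
      condExp_sum_const_mul (m := F) univ η fun i _ => integrable_mul_of_condExp_eq (hg i) (hgD i),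
      ae_all_iff.2 fun i => condExp_mul_eq_sq_of_condExp_eq (hD i) (hg i) (hgD i)]
    with ω h₁ h₂ h₃ h₄ h₅ h₆
  simp only [Pi.add_apply, Pi.sub_apply, Pi.smul_apply, smul_eq_mul] at h₁ h₂ h₃ ⊢
  have hlin : ∑ i, η i * μ[D i * g i | F] ω = ∑ i, η i * pderiv' f i (θ ω) ^ 2 :=
    Finset.sum_congr rfl fun i _ => by rw [h₆ i]; rfl
  rw [h₂, h₃, h₄, h₅, hlin] at h₁
  linarith

/-- One step of the stochastic MTSL iteration on a coordinatewise `L`-smooth `f` with an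
unbiased gradient estimate: almost surely
`E[f(θ(t+1)) | ℱₜ] ≤ f(θ(t)) − Σᵢ ηᵢ(t)(∂ᵢf(θ(t)))² + (1/2) Σᵢ Lᵢ ηᵢ(t)² E[g̃ᵢ(t)² | ℱₜ]`. -/
theorem mtsl_sgd_descent_step {n : ℕ} {Ω : Type*} {m0 : MeasurableSpace Ω}
    (μ : Measure Ω) [IsProbabilityMeasure μ]
    (F : MeasurableSpace Ω) (hF : F ≤ m0)
    (f : (Fin n → ℝ) → ℝ) (L : Fin n → ℝ)
    (hdiff : Differentiable ℝ f)
    (hL : ∀ i, 0 < L i)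
    (hsmooth : ∀ x y : Fin n → ℝ,
      f y ≤ f x + (∑ i, pderiv' f i x * (y i - x i)) + (1 / 2) * ∑ i, L i * (y i - x i) ^ 2)
    (η : Fin n → ℝ) (hη : ∀ i, 0 < η i)
    (θ gt : Ω → Fin n → ℝ)
    (hθmeas : Measurable[F] θ)
    (hgt2 : MemLp gt 2 μ)
    (hunbiased : μ[gt | F] =ᵐ[μ] fun ω => fun i => pderiv' f i (θ ω))
    (hfint : Integrable (fun ω => f (fun i => θ ω i - η i * gt ω i)) μ) :
    μ[(fun ω => f (fun i => θ ω i - η i * gt ω i)) | F] ≤ᵐ[μ]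
      fun ω => f (θ ω) - (∑ i, η i * (pderiv' f i (θ ω)) ^ 2)
        + (1 / 2) * ∑ i, L i * (η i) ^ 2 * (μ[(fun ω' => (gt ω' i) ^ 2) | F]) ω :=
  mtsl_sgd_descent_step_general μ F hF f L hdiff hsmooth η θ gt hθmeas hgt2 hunbiased hfint
end

section
/- Let f : ℝⁿ → ℝ be differentiable, coordinatewise L-smooth for some L ∈ ℝⁿ with all entries Lᵢ > 0, and bounded below by f* ∈ ℝ (f(x) ≥ f* for all x). Let θ(t), t = 0, …, T, be generated by the stochastic MTSL iteration from a deterministic initial point θ(0), satisfying for every t ∈ {0,…,T−1}: unbiasedness E[g̃(t) | ℱ_t] = ∇f(θ(t)) almost surely and second-moment bound E[‖g̃(t)‖²] ≤ G². Assume f(θ(t)) and ‖∇f(θ(t))‖² are integrable for all t, and write L_max = maxᵢ Lᵢ. Then Σ_{t=0}^{T−1} η_min(t) E[ ‖∇f(θ(t))‖² ] ≤ f(θ(0)) − f* + (L_max G² / 2) Σ_{t=0}^{T−1} η_max(t)². -/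
open MeasureTheory Finset

section Deterministic

variable {ι : Type*} [Fintype ι]

/-- `D x` plays the role of `∇f x`; the inequality is the only link between `D` and `f`. -/
def CoordSmoothWith (f : (ι → ℝ) → ℝ) (D : (ι → ℝ) → ι → ℝ) (L : ι → ℝ) : Prop :=
  ∀ x y : ι → ℝ, f y ≤ f x + (∑ i, D x i * (y i - x i)) + (1 / 2) * ∑ i, L i * (y i - x i) ^ 2

theorem CoordSmoothWith.apply_sub_mul_le {f : (ι → ℝ) → ℝ} {D : (ι → ℝ) → ι → ℝ} {L : ι → ℝ}
    (hsmooth : CoordSmoothWith f D L) (x g η : ι → ℝ) :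
    f (x - η * g) ≤
      f x - ∑ i, η i * (D x i * g i) + (1 / 2) * ∑ i, L i * η i ^ 2 * g i ^ 2 := by
  refine (hsmooth x (x - η * g)).trans_eq ?_
  simp only [Pi.sub_apply, Pi.mul_apply, sub_sub_cancel_left, sub_eq_add_neg (f x),
    ← sum_neg_distrib]
  congr 2 <;> exact sum_congr rfl fun i _ => by ring

theorem inf'_mul_sum_le_sum_mul [Nonempty ι] (η a : ι → ℝ) (ha : ∀ i, 0 ≤ a i) :
    univ.inf' univ_nonempty η * ∑ i, a i ≤ ∑ i, η i * a i := by
  rw [mul_sum]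
  exact sum_le_sum fun i _ => mul_le_mul_of_nonneg_right (inf'_le η (mem_univ i)) (ha i)

theorem sum_mul_sq_mul_le_sup' [Nonempty ι] {L η b : ι → ℝ} (hL : ∀ i, 0 ≤ L i)
    (hη : ∀ i, 0 ≤ η i) (hb : ∀ i, 0 ≤ b i) :
    ∑ i, L i * η i ^ 2 * b i ≤
      univ.sup' univ_nonempty L * univ.sup' univ_nonempty η ^ 2 * ∑ i, b i := by
  have hLmax : 0 ≤ univ.sup' univ_nonempty L :=
    (hL (Classical.arbitrary ι)).trans (le_sup' L (mem_univ _))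
  rw [mul_sum]
  refine sum_le_sum fun i _ => mul_le_mul_of_nonneg_right ?_ (hb i)
  exact mul_le_mul (le_sup' L (mem_univ i))
    (pow_le_pow_left₀ (hη i) (le_sup' η (mem_univ i)) 2) (sq_nonneg _) hLmax

end Deterministic

theorem sum_range_le_sub_add_sum {a c A : ℕ → ℝ} {T : ℕ}
    (h : ∀ t < T, a t ≤ A t - A (t + 1) + c t) :
    ∑ t ∈ range T, a t ≤ A 0 - A T + ∑ t ∈ range T, c t := by
  calc ∑ t ∈ range T, a t ≤ ∑ t ∈ range T, (A t - A (t + 1) + c t) :=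
        sum_le_sum fun t ht => h t (mem_range.mp ht)
    _ = A 0 - A T + ∑ t ∈ range T, c t := by rw [sum_add_distrib, sum_range_sub']

section Stochastic

variable {Ω ι : Type*} [Fintype ι] {m m0 : MeasurableSpace Ω} {μ : Measure Ω}

theorem integrable_sq_of_integrable_sum_sq {F : Ω → ι → ℝ}
    (hF : ∀ i, AEStronglyMeasurable (fun ω => F ω i) μ)
    (h : Integrable (fun ω => ∑ i, F ω i ^ 2) μ) (i : ι) :
    Integrable (fun ω => F ω i ^ 2) μ :=
  h.mono' ((hF i).pow 2) <| .of_forall fun ω => by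
    rw [Real.norm_of_nonneg (sq_nonneg _)]
    exact single_le_sum (f := fun j => F ω j ^ 2) (fun j _ => sq_nonneg _) (mem_univ i)

variable [IsFiniteMeasure μ]

theorem integral_mul_condExp_of_stronglyMeasurable (hm : m ≤ m0) {X Y : Ω → ℝ}
    (hX : StronglyMeasurable[m] X) (hXY : Integrable (X * Y) μ) (hY : Integrable Y μ) :
    ∫ ω, X ω * μ[Y | m] ω ∂μ = ∫ ω, X ω * Y ω ∂μ := by
  calc ∫ ω, X ω * μ[Y | m] ω ∂μ = ∫ ω, μ[X * Y | m] ω ∂μ :=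
        integral_congr_ae (condExp_mul_of_stronglyMeasurable_left hX hXY hY).symm
    _ = ∫ ω, X ω * Y ω ∂μ := integral_condExp hm

variable {f : (ι → ℝ) → ℝ} {D : (ι → ℝ) → ι → ℝ} {L : ι → ℝ}

theorem CoordSmoothWith.integral_apply_sub_mul_le (hm : m ≤ m0)
    (hsmooth : CoordSmoothWith f D L)
    (hD : ∀ i, Measurable fun x => D x i) (η : ι → ℝ) {x g : Ω → ι → ℝ}
    (hx : Measurable[m] x) (hg : MemLp g 2 μ)
    (hunbiased : μ[g | m] =ᵐ[μ] fun ω => D (x ω))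
    (hfx : Integrable (fun ω => f (x ω)) μ) (hfx' : Integrable (fun ω => f (x ω - η * g ω)) μ)
    (hDx : Integrable (fun ω => ∑ i, D (x ω) i ^ 2) μ) :
    ∫ ω, f (x ω - η * g ω) ∂μ ≤ ∫ ω, f (x ω) ∂μ - ∑ i, η i * ∫ ω, D (x ω) i ^ 2 ∂μ
      + (1 / 2) * ∑ i, L i * η i ^ 2 * ∫ ω, g ω i ^ 2 ∂μ := by
  have hDm : ∀ i, StronglyMeasurable[m] fun ω => D (x ω) i :=
    fun i => ((hD i).comp hx).stronglyMeasurable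
  have hDsq : ∀ i, Integrable (fun ω => D (x ω) i ^ 2) μ :=
    integrable_sq_of_integrable_sum_sq (fun i => ((hDm i).mono hm).aestronglyMeasurable) hDx
  have hD2 : ∀ i, MemLp (fun ω => D (x ω) i) 2 μ := fun i =>
    (memLp_two_iff_integrable_sq ((hDm i).mono hm).aestronglyMeasurable).2 (hDsq i)
  have hg2 : ∀ i, MemLp (fun ω => g ω i) 2 μ := hg.eval
  have hDg : ∀ i, Integrable (fun ω => D (x ω) i * g ω i) μ :=
    fun i => (hD2 i).integrable_mul (hg2 i)
  have hcross : ∀ i, ∫ ω, D (x ω) i * g ω i ∂μ = ∫ ω, D (x ω) i ^ 2 ∂μ := by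
    intro i
    have hcond : μ[fun ω => g ω i | m] =ᵐ[μ] fun ω => D (x ω) i := by
      filter_upwards [((ContinuousLinearMap.proj (R := ℝ) (φ := fun _ : ι => ℝ) i).comp_condExp_comm
        (m := m) (hg.integrable one_le_two)).symm, hunbiased] with ω h1 h2
      exact h1.trans (congrFun h2 i)
    rw [← integral_mul_condExp_of_stronglyMeasurable hm (hDm i) (hDg i)
      ((hg2 i).integrable one_le_two)]
    exact integral_congr_ae (hcond.mono fun ω h => by simp only [h, sq])
  have hint1 : Integrable (fun ω => ∑ i, η i * (D (x ω) i * g ω i)) μ :=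
    integrable_finsetSum _ fun i _ => (hDg i).const_mul _
  have hint2 : Integrable (fun ω => ∑ i, L i * η i ^ 2 * g ω i ^ 2) μ :=
    integrable_finsetSum _ fun i _ => (hg2 i).integrable_sq.const_mul _
  have hint3 : Integrable (fun ω => f (x ω) - ∑ i, η i * (D (x ω) i * g ω i)) μ :=
    hfx.sub hint1
  calc ∫ ω, f (x ω - η * g ω) ∂μ
      ≤ ∫ ω, (f (x ω) - ∑ i, η i * (D (x ω) i * g ω i)
          + (1 / 2) * ∑ i, L i * η i ^ 2 * g ω i ^ 2) ∂μ :=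
        integral_mono hfx' (hint3.add (hint2.const_mul _))
          fun ω => hsmooth.apply_sub_mul_le (x ω) (g ω) η
    _ = _ := by
        rw [integral_add hint3 (hint2.const_mul _), integral_sub hfx hint1,
          integral_const_mul, integral_finsetSum _ fun i _ => (hDg i).const_mul _,
          integral_finsetSum _ fun i _ => (hg2 i).integrable_sq.const_mul _]
        simp only [integral_const_mul, hcross]

theorem CoordSmoothWith.inf'_mul_integral_sum_sq_le [Nonempty ι] (hm : m ≤ m0)
    (hsmooth : CoordSmoothWith f D L)
    (hD : ∀ i, Measurable fun x => D x i) (hL : ∀ i, 0 ≤ L i) {η : ι → ℝ} (hη : ∀ i, 0 ≤ η i)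
    {x g : Ω → ι → ℝ} (hx : Measurable[m] x) (hg : MemLp g 2 μ)
    (hunbiased : μ[g | m] =ᵐ[μ] fun ω => D (x ω))
    (hfx : Integrable (fun ω => f (x ω)) μ) (hfx' : Integrable (fun ω => f (x ω - η * g ω)) μ)
    (hDx : Integrable (fun ω => ∑ i, D (x ω) i ^ 2) μ) {G : ℝ}
    (hG : ∫ ω, ∑ i, g ω i ^ 2 ∂μ ≤ G ^ 2) :
    univ.inf' univ_nonempty η * ∫ ω, ∑ i, D (x ω) i ^ 2 ∂μ ≤
      ∫ ω, f (x ω) ∂μ - ∫ ω, f (x ω - η * g ω) ∂μ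
        + univ.sup' univ_nonempty L * G ^ 2 / 2 * univ.sup' univ_nonempty η ^ 2 := by
  have hdescent := hsmooth.integral_apply_sub_mul_le hm hD η hx hg hunbiased hfx hfx' hDx
  have hDsq := integrable_sq_of_integrable_sum_sq (F := fun ω => D (x ω))
    (fun i => ((hD i).comp (hx.mono hm le_rfl)).aestronglyMeasurable) hDx
  rw [integral_finsetSum _ fun i _ => (hg.eval i).integrable_sq] at hG
  rw [integral_finsetSum _ fun i _ => hDsq i]
  have hgrad := inf'_mul_sum_le_sum_mul η (fun i => ∫ ω, D (x ω) i ^ 2 ∂μ)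
    fun i => integral_nonneg fun ω => sq_nonneg _
  have hnoise := sum_mul_sq_mul_le_sup' (b := fun i => ∫ ω, g ω i ^ 2 ∂μ) hL hη
    fun i => integral_nonneg fun ω => sq_nonneg _
  have hLη : 0 ≤ univ.sup' univ_nonempty L * univ.sup' univ_nonempty η ^ 2 :=
    mul_nonneg ((hL (Classical.arbitrary ι)).trans (le_sup' L (mem_univ _))) (sq_nonneg _)
  nlinarith [mul_le_mul_of_nonneg_left hG hLη]

end Stochastic

theorem mtsl_sgd_nonconvex_sum_general {n : ℕ} [NeZero n] {Ω : Type*} {m0 : MeasurableSpace Ω}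
    (μ : Measure Ω) [IsProbabilityMeasure μ]
    (𝓕 : Filtration ℕ m0)
    (f : (Fin n → ℝ) → ℝ) (L : Fin n → ℝ)
    (hL : ∀ i, 0 < L i)
    (hsmooth : ∀ x y : Fin n → ℝ,
      f y ≤ f x + (∑ i, pderiv' f i x * (y i - x i)) + (1 / 2) * ∑ i, L i * (y i - x i) ^ 2)
    (fstar : ℝ) (hbdd : ∀ x, fstar ≤ f x)
    (η : ℕ → Fin n → ℝ) (hη : ∀ t i, 0 < η t i)
    (G : ℝ) (T : ℕ)
    (θ : ℕ → Ω → Fin n → ℝ) (gt : ℕ → Ω → Fin n → ℝ)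
    (θinit : Fin n → ℝ) (hθ0 : ∀ ω, θ 0 ω = θinit)
    (hadapted : Adapted 𝓕 θ)
    (hupdate : ∀ t ω, θ (t + 1) ω = fun i => θ t ω i - η t i * gt t ω i)
    (hgt2 : ∀ t, MemLp (gt t) 2 μ)
    (hunbiased : ∀ t < T, μ[gt t | 𝓕 t] =ᵐ[μ] fun ω => fun i => pderiv' f i (θ t ω))
    (hG : ∀ t < T, ∫ ω, ∑ i, (gt t ω i) ^ 2 ∂μ ≤ G ^ 2)
    (hfint : ∀ t, Integrable (fun ω => f (θ t ω)) μ)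
    (hgradint : ∀ t, Integrable (fun ω => ∑ i, (pderiv' f i (θ t ω)) ^ 2) μ) :
    ∑ t ∈ Finset.range T,
        (Finset.univ.inf' Finset.univ_nonempty (η t)) *
          ∫ ω, ∑ i, (pderiv' f i (θ t ω)) ^ 2 ∂μ ≤
      f θinit - fstar
        + ((Finset.univ.sup' Finset.univ_nonempty L) * G ^ 2 / 2) *
            ∑ t ∈ Finset.range T, (Finset.univ.sup' Finset.univ_nonempty (η t)) ^ 2 := by
  have hsucc : ∀ t, θ (t + 1) = fun ω => θ t ω - η t * gt t ω := fun t => funext (hupdate t)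
  have hstep : ∀ t < T, univ.inf' univ_nonempty (η t) * ∫ ω, ∑ i, pderiv' f i (θ t ω) ^ 2 ∂μ ≤
      ∫ ω, f (θ t ω) ∂μ - ∫ ω, f (θ (t + 1) ω) ∂μ
        + univ.sup' univ_nonempty L * G ^ 2 / 2 * univ.sup' univ_nonempty (η t) ^ 2 := by
    intro t ht
    rw [hsucc]
    exact CoordSmoothWith.inf'_mul_integral_sum_sq_le (𝓕.le t) hsmooth
      (fun i => measurable_fderiv_apply_const ℝ f (Pi.single i 1)) (fun i => (hL i).le)
      (fun i => (hη t i).le) (hadapted t) (hgt2 t) (hunbiased t ht) (hfint t)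
      (by simpa only [hsucc] using hfint (t + 1)) (hgradint t) (hG t ht)
  have hinit : ∫ ω, f (θ 0 ω) ∂μ = f θinit := by simp [hθ0]
  have hfinal : fstar ≤ ∫ ω, f (θ T ω) ∂μ := by
    simpa using integral_mono (integrable_const fstar) (hfint T) fun ω => hbdd (θ T ω)
  rw [mul_sum]
  linarith [sum_range_le_sub_add_sum hstep]

/-- Summed descent bound for the stochastic MTSL iteration on a differentiable,
coordinatewise `L`-smooth `f` bounded below by `f*`, with unbiased gradient estimates and
second-moment bound `E‖g̃(t)‖² ≤ G²`:
`Σ_{t<T} η_min(t) E‖∇f(θ(t))‖² ≤ f(θ(0)) − f* + (L_max G²/2) Σ_{t<T} η_max(t)²`. -/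
theorem mtsl_sgd_nonconvex_sum {n : ℕ} [NeZero n] {Ω : Type*} {m0 : MeasurableSpace Ω}
    (μ : Measure Ω) [IsProbabilityMeasure μ]
    (𝓕 : Filtration ℕ m0)
    (f : (Fin n → ℝ) → ℝ) (L : Fin n → ℝ)
    (hdiff : Differentiable ℝ f)
    (hL : ∀ i, 0 < L i)
    (hsmooth : ∀ x y : Fin n → ℝ,
      f y ≤ f x + (∑ i, pderiv' f i x * (y i - x i)) + (1 / 2) * ∑ i, L i * (y i - x i) ^ 2)
    (fstar : ℝ) (hbdd : ∀ x, fstar ≤ f x)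
    (η : ℕ → Fin n → ℝ) (hη : ∀ t i, 0 < η t i)
    (G : ℝ) (T : ℕ) (hT : 1 ≤ T)
    (θ : ℕ → Ω → Fin n → ℝ) (gt : ℕ → Ω → Fin n → ℝ)
    (θinit : Fin n → ℝ) (hθ0 : ∀ ω, θ 0 ω = θinit)
    (hadapted : Adapted 𝓕 θ)
    (hupdate : ∀ t ω, θ (t + 1) ω = fun i => θ t ω i - η t i * gt t ω i)
    (hgt2 : ∀ t, MemLp (gt t) 2 μ)
    (hunbiased : ∀ t < T, μ[gt t | 𝓕 t] =ᵐ[μ] fun ω => fun i => pderiv' f i (θ t ω))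
    (hG : ∀ t < T, ∫ ω, ∑ i, (gt t ω i) ^ 2 ∂μ ≤ G ^ 2)
    (hfint : ∀ t, Integrable (fun ω => f (θ t ω)) μ)
    (hgradint : ∀ t, Integrable (fun ω => ∑ i, (pderiv' f i (θ t ω)) ^ 2) μ) :
    ∑ t ∈ Finset.range T,
        (Finset.univ.inf' Finset.univ_nonempty (η t)) *
          ∫ ω, ∑ i, (pderiv' f i (θ t ω)) ^ 2 ∂μ ≤
      f θinit - fstar
        + ((Finset.univ.sup' Finset.univ_nonempty L) * G ^ 2 / 2) *
            ∑ t ∈ Finset.range T, (Finset.univ.sup' Finset.univ_nonempty (η t)) ^ 2 :=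
  mtsl_sgd_nonconvex_sum_general μ 𝓕 f L hL hsmooth fstar hbdd η hη G T θ gt θinit hθ0 hadapted
    hupdate hgt2 hunbiased hG hfint hgradint
end

section
/- (Proposition 2, non-convex case.) Let f : ℝⁿ → ℝ be differentiable, coordinatewise L-smooth for some L ∈ ℝⁿ with all entries Lᵢ > 0, and bounded below by f* ∈ ℝ (f(x) ≥ f* for all x). Let θ(t), t = 0, …, T, be generated by the stochastic MTSL iteration from a deterministic initial point θ(0), satisfying for every t ∈ {0,…,T−1}: unbiasedness E[g̃(t) | ℱ_t] = ∇f(θ(t)) almost surely and second-moment bound E[‖g̃(t)‖²] ≤ G². Assume f(θ(t)) and ‖∇f(θ(t))‖² are integrable for all t, and write L_max = maxᵢ Lᵢ. Then min_{0 ≤ t ≤ T−1} E[ ‖∇f(θ(t))‖² ] ≤ ( f(θ(0)) − f* + (L_max G² / 2) Σ_{t=0}^{T−1} η_max(t)² ) / ( Σ_{t=0}^{T−1} η_min(t) ). -/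
/-!
The descent inequality along the step `-η ⊙ g̃(t)` bounds `f(θ(t+1))` by `f(θ(t))` minus
`Σᵢ ηᵢ ∂ᵢf(θ(t)) g̃ᵢ(t)` plus `L_max η_max² ‖g̃(t)‖² / 2`. Since `∇f(θ(t))` is the conditional mean
of `g̃(t)`, it is square integrable and can be pulled out of the conditional expectation, so the
expected first-order term is `Σᵢ ηᵢ E[∂ᵢf(θ(t))²] ≥ η_min E‖∇f(θ(t))‖²`. Summing over `t`
telescopes, `f ≥ f*` bounds the last iterate, and the minimum of the `E‖∇f(θ(t))‖²` is at most
their `η_min`-weighted average.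
-/

open MeasureTheory Finset

def CoordwiseSmooth {n : ℕ} (f : (Fin n → ℝ) → ℝ) (L : Fin n → ℝ) : Prop :=
  ∀ x y : Fin n → ℝ,
    f y ≤ f x + (∑ i, pderiv' f i x * (y i - x i)) + (1 / 2) * ∑ i, L i * (y i - x i) ^ 2

theorem Finset.sum_mul_sq_mul_sq_le_sup' {ι : Type*} [Fintype ι] [Nonempty ι] {L η : ι → ℝ}
    (hL : ∀ i, 0 ≤ L i) (hη : ∀ i, 0 ≤ η i) (g : ι → ℝ) :
    ∑ i, L i * η i ^ 2 * g i ^ 2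
      ≤ univ.sup' univ_nonempty L * univ.sup' univ_nonempty η ^ 2 * ∑ i, g i ^ 2 := by
  rw [mul_sum]
  gcongr with i hi
  · exact (hL i).trans (le_sup' L hi)
  · exact le_sup' L hi
  · exact hη i
  · exact le_sup' η hi

theorem CoordwiseSmooth.apply_sub_mul_le {n : ℕ} [NeZero n] {f : (Fin n → ℝ) → ℝ}
    {L η : Fin n → ℝ} (hf : CoordwiseSmooth f L) (hL : ∀ i, 0 ≤ L i) (hη : ∀ i, 0 ≤ η i)
    (x g : Fin n → ℝ) :
    f (fun i => x i - η i * g i) ≤ f x - ∑ i, η i * (pderiv' f i x * g i)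
      + univ.sup' univ_nonempty L * univ.sup' univ_nonempty η ^ 2 / 2 * ∑ i, g i ^ 2 := by
  have hlin : ∑ i, pderiv' f i x * ((x i - η i * g i) - x i)
      = -∑ i, η i * (pderiv' f i x * g i) := by
    rw [← sum_neg_distrib]
    exact sum_congr rfl fun i _ => by ring
  have hquad : ∑ i, L i * ((x i - η i * g i) - x i) ^ 2 = ∑ i, L i * η i ^ 2 * g i ^ 2 :=
    sum_congr rfl fun i _ => by ring
  linarith [hf x (fun i => x i - η i * g i), sum_mul_sq_mul_sq_le_sup' hL hη g]

theorem integral_mul_eq_integral_sq_of_condExp_ae_eq {Ω : Type*} {m m0 : MeasurableSpace Ω}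
    {μ : Measure Ω} [IsFiniteMeasure μ] (hm : m ≤ m0) {g ξ : Ω → ℝ} (hg : MemLp g 2 μ)
    (hξ : μ[g | m] =ᵐ[μ] ξ) :
    ∫ ω, ξ ω * g ω ∂μ = ∫ ω, ξ ω ^ 2 ∂μ := by
  have hξL2 : MemLp ξ 2 μ := (hg.condExp one_le_two).ae_eq hξ
  have hξm : AEStronglyMeasurable[m] ξ μ :=
    stronglyMeasurable_condExp.aestronglyMeasurable.congr hξ
  calc ∫ ω, ξ ω * g ω ∂μ = ∫ ω, (μ[ξ * g | m]) ω ∂μ := (integral_condExp hm).symm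
    _ = ∫ ω, ξ ω * (μ[g | m]) ω ∂μ :=
        integral_congr_ae (condExp_mul_of_aestronglyMeasurable_left hξm
          (hξL2.integrable_mul hg) (hg.integrable one_le_two))
    _ = ∫ ω, ξ ω ^ 2 ∂μ := integral_congr_ae (by filter_upwards [hξ] with ω h; rw [h, sq])

theorem add_sum_range_le_of_forall_succ_add_le {u c d : ℕ → ℝ} {T : ℕ}
    (h : ∀ t < T, u (t + 1) + c t ≤ u t + d t) :
    u T + ∑ t ∈ range T, c t ≤ u 0 + ∑ t ∈ range T, d t := by
  have hc : ∑ t ∈ range T, c t ≤ ∑ t ∈ range T, (u t - u (t + 1) + d t) :=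
    sum_le_sum fun t ht => by linarith [h t (mem_range.mp ht)]
  rw [sum_add_distrib, sum_range_sub'] at hc
  linarith

theorem Finset.inf'_le_sum_mul_div_sum {α : Type*} {s : Finset α} (hs : s.Nonempty)
    {w a : α → ℝ} (hw : ∀ t ∈ s, 0 < w t) :
    s.inf' hs a ≤ (∑ t ∈ s, w t * a t) / ∑ t ∈ s, w t := by
  rw [le_div_iff₀ (sum_pos hw hs), mul_sum]
  refine sum_le_sum fun t ht => ?_
  rw [mul_comm]
  exact mul_le_mul_of_nonneg_left (inf'_le a ht) (hw t ht).le

theorem CoordwiseSmooth.integral_sgd_step_add_le {n : ℕ} [NeZero n] {Ω : Type*}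
    {m m0 : MeasurableSpace Ω} {μ : Measure Ω} [IsFiniteMeasure μ] (hm : m ≤ m0)
    {f : (Fin n → ℝ) → ℝ} {L η : Fin n → ℝ} (hf : CoordwiseSmooth f L) (hL : ∀ i, 0 ≤ L i)
    (hη : ∀ i, 0 ≤ η i) {x x' g : Ω → Fin n → ℝ}
    (hx' : ∀ ω, x' ω = fun i => x ω i - η i * g ω i) (hg : MemLp g 2 μ)
    (hunbiased : μ[g | m] =ᵐ[μ] fun ω i => pderiv' f i (x ω))
    (hfx : Integrable (fun ω => f (x ω)) μ) (hfx' : Integrable (fun ω => f (x' ω)) μ) :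
    ∫ ω, f (x' ω) ∂μ + univ.inf' univ_nonempty η * ∫ ω, ∑ i, pderiv' f i (x ω) ^ 2 ∂μ
      ≤ ∫ ω, f (x ω) ∂μ + univ.sup' univ_nonempty L * univ.sup' univ_nonempty η ^ 2 / 2
          * ∫ ω, ∑ i, g ω i ^ 2 ∂μ := by
  set D : Fin n → Ω → ℝ := fun i ω => pderiv' f i (x ω)
  have hgi : ∀ i, MemLp (fun ω => g ω i) 2 μ := memLp_pi_iff.mp hg
  have hcond : ∀ i, μ[fun ω => g ω i | m] =ᵐ[μ] D i := fun i => by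
    filter_upwards [(ContinuousLinearMap.proj (R := ℝ) i).comp_condExp_comm (m := m)
      (hg.integrable one_le_two), hunbiased] with ω hproj hω
    exact hproj.symm.trans (congrFun hω i)
  have hDi : ∀ i, MemLp (D i) 2 μ := fun i => ((hgi i).condExp one_le_two).ae_eq (hcond i)
  have hDg : ∀ i, Integrable (fun ω => D i ω * g ω i) μ := fun i =>
    (hDi i).integrable_mul (hgi i)
  have hcross : Integrable (fun ω => ∑ i, η i * (D i ω * g ω i)) μ :=
    integrable_finsetSum _ fun i _ => (hDg i).const_mul _
  have hfx_cross : Integrable (fun ω => f (x ω) - ∑ i, η i * (D i ω * g ω i)) μ :=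
    hfx.sub hcross
  have hsq : Integrable (fun ω => ∑ i, g ω i ^ 2) μ :=
    integrable_finsetSum _ fun i _ => (hgi i).integrable_sq
  have hdescent : univ.inf' univ_nonempty η * ∫ ω, ∑ i, D i ω ^ 2 ∂μ
      ≤ ∫ ω, ∑ i, η i * (D i ω * g ω i) ∂μ := by
    rw [integral_finsetSum _ fun i _ => (hDi i).integrable_sq,
      integral_finsetSum _ fun i _ => (hDg i).const_mul _, mul_sum]
    gcongr with i hi
    rw [integral_const_mul, integral_mul_eq_integral_sq_of_condExp_ae_eq hm (hgi i) (hcond i)]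
    exact mul_le_mul_of_nonneg_right (inf'_le η hi) (integral_nonneg fun ω => sq_nonneg _)
  have hexpect : ∫ ω, f (x' ω) ∂μ ≤ ∫ ω, (f (x ω) - ∑ i, η i * (D i ω * g ω i)
      + univ.sup' univ_nonempty L * univ.sup' univ_nonempty η ^ 2 / 2 * ∑ i, g ω i ^ 2) ∂μ :=
    integral_mono hfx' (hfx_cross.add (hsq.const_mul _)) fun ω => by
      rw [hx' ω]
      exact hf.apply_sub_mul_le hL hη (x ω) (g ω)
  rw [integral_add hfx_cross (hsq.const_mul _), integral_sub hfx hcross,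
    integral_const_mul] at hexpect
  linarith

/-- Proposition 2 (non-convex case): for the stochastic MTSL iteration on a differentiable,
coordinatewise `L`-smooth `f` bounded below by `f*`, with unbiased gradient estimates and
second-moment bound `E‖g̃(t)‖² ≤ G²`, the best iterate satisfies
`min_{0 ≤ t ≤ T−1} E‖∇f(θ(t))‖²
  ≤ (f(θ(0)) − f* + (L_max G²/2) Σ_{t<T} η_max(t)²) / (Σ_{t<T} η_min(t))`. -/
theorem mtsl_sgd_nonconvex_rate {n : ℕ} [NeZero n] {Ω : Type*} {m0 : MeasurableSpace Ω}
    (μ : Measure Ω) [IsProbabilityMeasure μ]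
    (𝓕 : Filtration ℕ m0)
    (f : (Fin n → ℝ) → ℝ) (L : Fin n → ℝ)
    (hL : ∀ i, 0 < L i)
    (hsmooth : ∀ x y : Fin n → ℝ,
      f y ≤ f x + (∑ i, pderiv' f i x * (y i - x i)) + (1 / 2) * ∑ i, L i * (y i - x i) ^ 2)
    (fstar : ℝ) (hbdd : ∀ x, fstar ≤ f x)
    (η : ℕ → Fin n → ℝ) (hη : ∀ t i, 0 < η t i)
    (G : ℝ) (T : ℕ) (hT : 1 ≤ T)
    (θ : ℕ → Ω → Fin n → ℝ) (gt : ℕ → Ω → Fin n → ℝ)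
    (θinit : Fin n → ℝ) (hθ0 : ∀ ω, θ 0 ω = θinit)
    (hupdate : ∀ t ω, θ (t + 1) ω = fun i => θ t ω i - η t i * gt t ω i)
    (hgt2 : ∀ t, MemLp (gt t) 2 μ)
    (hunbiased : ∀ t < T, μ[gt t | 𝓕 t] =ᵐ[μ] fun ω => fun i => pderiv' f i (θ t ω))
    (hG : ∀ t < T, ∫ ω, ∑ i, (gt t ω i) ^ 2 ∂μ ≤ G ^ 2)
    (hfint : ∀ t, Integrable (fun ω => f (θ t ω)) μ) :
    (Finset.range T).inf' (Finset.nonempty_range_iff.mpr (by omega))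
        (fun t => ∫ ω, ∑ i, (pderiv' f i (θ t ω)) ^ 2 ∂μ) ≤
      (f θinit - fstar
          + ((Finset.univ.sup' Finset.univ_nonempty L) * G ^ 2 / 2) *
              ∑ t ∈ Finset.range T, (Finset.univ.sup' Finset.univ_nonempty (η t)) ^ 2)
        / (∑ t ∈ Finset.range T, Finset.univ.inf' Finset.univ_nonempty (η t)) := by
  have hLmax : 0 ≤ univ.sup' univ_nonempty L := (hL 0).le.trans (le_sup' L (mem_univ 0))
  have hstep : ∀ t < T, ∫ ω, f (θ (t + 1) ω) ∂μ
      + univ.inf' univ_nonempty (η t) * ∫ ω, ∑ i, pderiv' f i (θ t ω) ^ 2 ∂μ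
      ≤ ∫ ω, f (θ t ω) ∂μ
        + univ.sup' univ_nonempty L * G ^ 2 / 2 * univ.sup' univ_nonempty (η t) ^ 2 := by
    intro t ht
    have hdescent := CoordwiseSmooth.integral_sgd_step_add_le (𝓕.le t) hsmooth
      (fun i => (hL i).le) (fun i => (hη t i).le) (hupdate t) (hgt2 t) (hunbiased t ht)
      (hfint t) (hfint (t + 1))
    have hnoise := mul_le_mul_of_nonneg_left (hG t ht)
      (div_nonneg (mul_nonneg hLmax (sq_nonneg (univ.sup' univ_nonempty (η t)))) zero_le_two)
    linarith
  have htelescope := add_sum_range_le_of_forall_succ_add_le (u := fun t => ∫ ω, f (θ t ω) ∂μ)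
    (c := fun t => univ.inf' univ_nonempty (η t) * ∫ ω, ∑ i, pderiv' f i (θ t ω) ^ 2 ∂μ)
    (d := fun t => univ.sup' univ_nonempty L * G ^ 2 / 2 * univ.sup' univ_nonempty (η t) ^ 2)
    hstep
  have hinit : ∫ ω, f (θ 0 ω) ∂μ = f θinit := by simp [hθ0]
  have hfinal : fstar ≤ ∫ ω, f (θ T ω) ∂μ := by
    simpa using integral_mono (integrable_const fstar) (hfint T) fun ω => hbdd (θ T ω)
  have hηmin : ∀ t ∈ range T, 0 < univ.inf' univ_nonempty (η t) := fun t _ =>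
    (lt_inf'_iff _).mpr fun i _ => hη t i
  refine (inf'_le_sum_mul_div_sum _ hηmin).trans
    (div_le_div_of_nonneg_right ?_ (sum_nonneg fun t ht => (hηmin t ht).le))
  simp only [← mul_sum] at htelescope
  linarith
end
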